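/- The basic sorting operators τ̄_i on ℝ^n (swap coordinates i, i+1 if x_i < x_{i+1}, otherwise fix) satisfy the braid relation τ̄_i ∘ τ̄_{i+1} ∘ τ̄_i = τ̄_{i+1} ∘ τ̄_i ∘ τ̄_{i+1} for i = 1,...,n-2. -/

import Mathlib

open Classical in
/-- The basic sorting operator on `ℝⁿ`: swaps coordinates `i, j` if `x i < x j`,
and fixes `x` otherwise. -/
noncomputable def tauUp {n : ℕ} (i j : Fin n) (x : Fin n → ℝ) : Fin n → ℝ :=
  if x i < x j then x ∘ Equiv.swap i j else x

/-!
For `i ≠ j`, `tauUp i j` is the comparator of a sorting network: it writes `x i ⊔ x j` at `i`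
and `x i ⊓ x j` at `j`. Both sides of the braid relation are bubble sorts of three coordinates
and leave there their maximum, median and minimum; the two expressions for the median that
arise agree in every distributive lattice.
-/

section LatticeIdentities

variable {α : Type*}

theorem sup_sup_inf_sup_eq [Lattice α] (a b c : α) : a ⊔ b ⊔ (a ⊓ b ⊔ c) = a ⊔ (b ⊔ c) := by
  rw [← sup_assoc, sup_of_le_left inf_le_sup, sup_assoc]

theorem inf_sup_inf_inf_eq [Lattice α] (a b c : α) : a ⊓ (b ⊔ c) ⊓ (b ⊓ c) = a ⊓ b ⊓ c := by
  rw [inf_assoc, inf_of_le_right inf_le_sup, inf_assoc]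

theorem sup_inf_sup_inf_eq [DistribLattice α] (a b c : α) :
    (a ⊔ b) ⊓ (a ⊓ b ⊔ c) = a ⊓ (b ⊔ c) ⊔ b ⊓ c := by
  rw [inf_sup_left, inf_sup_left, inf_of_le_right (inf_le_left.trans le_sup_left), inf_sup_right,
    sup_assoc]

end LatticeIdentities

section Comparator

open Function

variable {ι α : Type*} [DecidableEq ι]

def comparator [Lattice α] (i j : ι) (x : ι → α) : ι → α :=
  update (update x j (x i ⊓ x j)) i (x i ⊔ x j)

section Lattice

variable [Lattice α] {i j k : ι} (x : ι → α)

@[simp]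
theorem comparator_apply_left : comparator i j x i = x i ⊔ x j := update_self ..

@[simp]
theorem comparator_apply_right (hij : i ≠ j) : comparator i j x j = x i ⊓ x j := by
  rw [comparator, update_of_ne hij.symm, update_self]

theorem comparator_apply_of_ne (hi : k ≠ i) (hj : k ≠ j) : comparator i j x k = x k := by
  rw [comparator, update_of_ne hi, update_of_ne hj]

end Lattice

theorem comparator_braid [DistribLattice α] {a b c : ι} (hab : a ≠ b) (hac : a ≠ c)
    (hbc : b ≠ c) :
    comparator (α := α) a b ∘ comparator b c ∘ comparator a b =
      comparator b c ∘ comparator a b ∘ comparator b c := by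
  have hba := hab.symm
  have hca := hac.symm
  have hcb := hbc.symm
  funext x k
  simp only [comp_apply]
  obtain rfl | hka := eq_or_ne k a
  · simp [comparator_apply_of_ne, *, sup_sup_inf_sup_eq]
  obtain rfl | hkb := eq_or_ne k b
  · simp [comparator_apply_of_ne, *, sup_inf_sup_inf_eq]
  obtain rfl | hkc := eq_or_ne k c
  · simp [comparator_apply_of_ne, *, inf_sup_inf_inf_eq]
  simp only [comparator_apply_of_ne _ hka hkb, comparator_apply_of_ne _ hkb hkc]

end Comparator

theorem tauUp_eq_comparator {n : ℕ} {i j : Fin n} (hij : i ≠ j) : tauUp i j = comparator i j := by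
  funext x k
  unfold tauUp
  split_ifs with h
  · obtain rfl | hki := eq_or_ne k i
    · simp [h.le]
    obtain rfl | hkj := eq_or_ne k j
    · simp [hij, h.le]
    simp [comparator_apply_of_ne _ hki hkj, Equiv.swap_apply_of_ne_of_ne hki hkj]
  · rw [not_lt] at h
    obtain rfl | hki := eq_or_ne k i
    · simp [h]
    obtain rfl | hkj := eq_or_ne k j
    · simp [hij, h]
    simp [comparator_apply_of_ne _ hki hkj]

/-- The basic sorting operators on `ℝⁿ` satisfy the braid relation
`τ̄_i ∘ τ̄_{i+1} ∘ τ̄_i = τ̄_{i+1} ∘ τ̄_i ∘ τ̄_{i+1}`. -/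
theorem tauUp_braid (n i : ℕ) (hi : i + 2 < n) :
    tauUp (⟨i, by omega⟩ : Fin n) ⟨i + 1, by omega⟩ ∘
        tauUp ⟨i + 1, by omega⟩ ⟨i + 2, hi⟩ ∘
        tauUp ⟨i, by omega⟩ ⟨i + 1, by omega⟩
      = tauUp ⟨i + 1, by omega⟩ ⟨i + 2, hi⟩ ∘
          tauUp ⟨i, by omega⟩ ⟨i + 1, by omega⟩ ∘
          tauUp ⟨i + 1, by omega⟩ ⟨i + 2, hi⟩ := by
  rw [tauUp_eq_comparator (by simp [Fin.ext_iff]), tauUp_eq_comparator (by simp [Fin.ext_iff])]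
  exact comparator_braid (by simp [Fin.ext_iff]) (by simp [Fin.ext_iff]) (by simp [Fin.ext_iff])
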